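/- Let S be a finite type and let the symmetric group Perm(S) act on reward vectors θ : S → ℝ by (σ · θ) = θ ∘ σ⁻¹. Let Θ be a set of reward vectors and let p₀, p₁ : (S → ℝ) → ℝ be arbitrary functions. Fix θ ∈ Θ, let Orbit_Θ(θ) := {θ' ∈ Θ | ∃ σ ∈ Perm(S), θ' = σ · θ}, O₊ := {θ' ∈ Orbit_Θ(θ) | p₁(θ') > p₀(θ')} and O₋ := {θ' ∈ Orbit_Θ(θ) | p₀(θ') > p₁(θ')}. Suppose there exists a set Φ of n permutations of S satisfying: (1) for every φ ∈ Φ and θ' ∈ O₋, p₁(φ · θ') > p₀(φ · θ'); (2) for every φ ∈ Φ and θ' ∈ O₋, φ · θ' ∈ Θ; (3) for distinct φ', φ'' ∈ Φ and all θ', θ'' ∈ O₋, φ' · θ' ≠ φ'' · θ''. Then (n + 1) · |O₊| ≥ n · (|O₊| + |O₋|); that is, among orbit elements with a strict preference, at least a fraction n/(n+1) prefer action set A₁. -/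

import Mathlib

/-!
Each `φ ∈ Φ` maps `O₋` injectively into `O₊`, and distinct `φ` have disjoint images, so
`|O₊| ≥ n · |O₋|`, which rearranges to `(n + 1) · |O₊| ≥ n · (|O₊| + |O₋|)`.
-/

/-- The action of a permutation `σ` of states on a reward vector `θ : S → ℝ`,
given by `(σ · θ) s = θ (σ⁻¹ s)`. -/
def permAct {S : Type*} (σ : Equiv.Perm S) (θ : S → ℝ) : S → ℝ := θ ∘ ⇑σ⁻¹

def orbitIn {S : Type*} (Θ : Set (S → ℝ)) (θ : S → ℝ) : Set (S → ℝ) :=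
  {θ' ∈ Θ | ∃ σ : Equiv.Perm S, θ' = permAct σ θ}

def orbitPref {S : Type*} (Θ : Set (S → ℝ)) (pA pB : (S → ℝ) → ℝ) (θ : S → ℝ) :
    Set (S → ℝ) :=
  {θ' ∈ orbitIn Θ θ | pA θ' > pB θ'}

theorem Set.card_mul_ncard_le_ncard_of_injOn {α β γ : Type*} (Φ : Finset α) {A : Set β}
    {B : Set γ} (hB : B.Finite) (f : α → β → γ) (hmaps : ∀ φ ∈ Φ, ∀ x ∈ A, f φ x ∈ B)
    (hinj : ∀ φ ∈ Φ, Set.InjOn (f φ) A)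
    (hdisj : ∀ φ ∈ Φ, ∀ ψ ∈ Φ, φ ≠ ψ → ∀ x ∈ A, ∀ y ∈ A, f φ x ≠ f ψ y) :
    Φ.card * A.ncard ≤ B.ncard := by
  rw [← Set.ncard_coe_finset Φ, ← Set.ncard_prod]
  refine Set.ncard_le_ncard_of_injOn (Function.uncurry f)
    (fun p ⟨hφ, hx⟩ => hmaps p.1 hφ p.2 hx) ?_ hB
  rintro ⟨φ, x⟩ ⟨hφ, hx⟩ ⟨ψ, y⟩ ⟨hψ, hy⟩ hfxy
  obtain rfl : φ = ψ := by_contra fun hne => hdisj φ hφ ψ hψ hne x hx y hy hfxy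
  exact congrArg (φ, ·) (hinj φ hφ hx hy hfxy)

section permAct

variable {S : Type*}

theorem permAct_mul (φ σ : Equiv.Perm S) (θ : S → ℝ) :
    permAct φ (permAct σ θ) = permAct (φ * σ) θ := by
  funext s
  simp [permAct, mul_inv_rev]

theorem permAct_injective (φ : Equiv.Perm S) : Function.Injective (permAct φ) := by
  intro a b h
  funext s
  simpa [permAct] using congrFun h (φ s)

theorem permAct_mem_orbitIn {Θ : Set (S → ℝ)} {θ θ' : S → ℝ} (φ : Equiv.Perm S)
    (hθ' : θ' ∈ orbitIn Θ θ) (hΘ : permAct φ θ' ∈ Θ) : permAct φ θ' ∈ orbitIn Θ θ := by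
  obtain ⟨-, σ, rfl⟩ := hθ'
  exact ⟨hΘ, φ * σ, permAct_mul φ σ θ⟩

theorem orbitIn_finite [Finite S] (Θ : Set (S → ℝ)) (θ : S → ℝ) : (orbitIn Θ θ).Finite :=
  (Set.finite_range fun σ : Equiv.Perm S => permAct σ θ).subset
    fun _ ⟨_, σ, hσ⟩ => ⟨σ, hσ.symm⟩

theorem orbitPref_finite [Finite S] (Θ : Set (S → ℝ)) (pA pB : (S → ℝ) → ℝ) (θ : S → ℝ) :
    (orbitPref Θ pA pB θ).Finite :=
  (orbitIn_finite Θ θ).subset fun _ hθ' => hθ'.1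

end permAct

theorem retargetable_majority_prefers_A1_general {S : Type*} [Fintype S]
    (Θ : Set (S → ℝ)) (p₀ p₁ : (S → ℝ) → ℝ) (θ : S → ℝ)
    (n : ℕ) (Φ : Finset (Equiv.Perm S)) (hΦ : Φ.card = n)
    (h1 : ∀ φ ∈ Φ, ∀ θ' ∈ orbitPref Θ p₀ p₁ θ,
      p₁ (permAct φ θ') > p₀ (permAct φ θ'))
    (h2 : ∀ φ ∈ Φ, ∀ θ' ∈ orbitPref Θ p₀ p₁ θ, permAct φ θ' ∈ Θ)
    (h3 : ∀ φ' ∈ Φ, ∀ φ'' ∈ Φ, φ' ≠ φ'' →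
      ∀ θ' ∈ orbitPref Θ p₀ p₁ θ, ∀ θ'' ∈ orbitPref Θ p₀ p₁ θ,
        permAct φ' θ' ≠ permAct φ'' θ'') :
    (n + 1) * (orbitPref Θ p₁ p₀ θ).ncard ≥
      n * ((orbitPref Θ p₁ p₀ θ).ncard + (orbitPref Θ p₀ p₁ θ).ncard) := by
  have hmaps : ∀ φ ∈ Φ, ∀ θ' ∈ orbitPref Θ p₀ p₁ θ, permAct φ θ' ∈ orbitPref Θ p₁ p₀ θ :=
    fun φ hφ θ' hθ' =>
      ⟨permAct_mem_orbitIn φ hθ'.1 (h2 φ hφ θ' hθ'), h1 φ hφ θ' hθ'⟩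
  have key : n * (orbitPref Θ p₀ p₁ θ).ncard ≤ (orbitPref Θ p₁ p₀ θ).ncard :=
    hΦ ▸ Set.card_mul_ncard_le_ncard_of_injOn Φ (orbitPref_finite Θ p₁ p₀ θ) permAct hmaps
      (fun φ _ => (permAct_injective φ).injOn) h3
  nlinarith

/-- Quantitative form of the retargetability theorem: among orbit elements with a
strict preference, at least a fraction `n / (n + 1)` prefer action set `A₁`,
i.e. `(n + 1) * |O₊| ≥ n * (|O₊| + |O₋|)`. -/
theorem retargetable_majority_prefers_A1 {S : Type*} [Fintype S]
    (Θ : Set (S → ℝ)) (p₀ p₁ : (S → ℝ) → ℝ) (θ : S → ℝ) (hθ : θ ∈ Θ)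
    (n : ℕ) (Φ : Finset (Equiv.Perm S)) (hΦ : Φ.card = n)
    (h1 : ∀ φ ∈ Φ, ∀ θ' ∈ orbitPref Θ p₀ p₁ θ,
      p₁ (permAct φ θ') > p₀ (permAct φ θ'))
    (h2 : ∀ φ ∈ Φ, ∀ θ' ∈ orbitPref Θ p₀ p₁ θ, permAct φ θ' ∈ Θ)
    (h3 : ∀ φ' ∈ Φ, ∀ φ'' ∈ Φ, φ' ≠ φ'' →
      ∀ θ' ∈ orbitPref Θ p₀ p₁ θ, ∀ θ'' ∈ orbitPref Θ p₀ p₁ θ,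
        permAct φ' θ' ≠ permAct φ'' θ'') :
    (n + 1) * (orbitPref Θ p₁ p₀ θ).ncard ≥
      n * ((orbitPref Θ p₁ p₀ θ).ncard + (orbitPref Θ p₀ p₁ θ).ncard) :=
  retargetable_majority_prefers_A1_general Θ p₀ p₁ θ n Φ hΦ h1 h2 h3
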